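/- arXiv:2302.10814 — 2 statements merged into one kernel-verified Lean document; each statement's English description precedes it below -/
import Mathlib

section
/- For every n ≥ 0, the map λ ↦ C_λ is a bijection from the set of noncrossing partitions of size n to the set of excedance classes S_n/∼; that is, every C_λ is nonempty, distinct noncrossing partitions give distinct (disjoint) classes, and every equivalence class of ∼ equals C_λ for some noncrossing partition λ. In particular, the number of excedance classes of S_n is the n-th Catalan number. -/
open scoped Classical

noncomputable section

/-- `IsNCP n A` : `A` is the arc set of a noncrossing partition of size `n`
(arcs `(i,j)` with `i < j`; no two distinct arcs `(i,k)`, `(j,l)` with `i ≤ j < k ≤ l`,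
i.e. no crossings and no shared endpoints). -/
def IsNCP (n : ℕ) (A : Finset (Fin n × Fin n)) : Prop :=
  (∀ p ∈ A, p.1 < p.2) ∧
    ∀ p ∈ A, ∀ q ∈ A, p ≠ q → ¬(p.1 ≤ q.1 ∧ q.1 < p.2 ∧ p.2 ≤ q.2)

/-- Noncrossing partitions of size `n` (labelled `1, …, n`, realized as `Fin n`). -/
def NCP (n : ℕ) : Type := {A : Finset (Fin n × Fin n) // IsNCP n A}

noncomputable instance (n : ℕ) : Fintype (NCP n) := by
  unfold NCP; infer_instance

namespace NCP

variable {n : ℕ}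

/-- The set `λ⁺` of left endpoints of arcs. -/
def lpos (lam : NCP n) : Finset (Fin n) := lam.1.image Prod.fst

/-- The set `λ⁻` of right endpoints of arcs. -/
def rpos (lam : NCP n) : Finset (Fin n) := lam.1.image Prod.snd

/-- `a` and `b` lie in the same connected component of `λ` viewed as a graph. -/
def Connected (lam : NCP n) (a b : Fin n) : Prop :=
  Relation.ReflTransGen (fun x y => (x, y) ∈ lam.1 ∨ (y, x) ∈ lam.1) a b

/-- The connected component of `j` in `λ`. -/
def component (lam : NCP n) (j : Fin n) : Finset (Fin n) :=
  Finset.univ.filter fun i => Connected lam j i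

theorem mem_component_self (lam : NCP n) (j : Fin n) : j ∈ component lam j :=
  Finset.mem_filter.mpr ⟨Finset.mem_univ j, Relation.ReflTransGen.refl⟩

/-- The largest element of the connected component of `j` in `λ`. -/
def compMax (lam : NCP n) (j : Fin n) : Fin n :=
  (component lam j).max' ⟨j, mem_component_self lam j⟩

/-- The function underlying the permutation `Q_λ` : `j ↦ i` if `(i,j)` is an arc of `λ`,
and `j ↦` the largest element of the connected component of `j` otherwise. -/
def Qfun (lam : NCP n) (j : Fin n) : Fin n :=
  if h : ∃ i, (i, j) ∈ lam.1 then h.choose else compMax lam j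

/-- `Q` is the permutation `Q_λ`. -/
def IsQ (lam : NCP n) (Q : Equiv.Perm (Fin n)) : Prop :=
  ∀ j, Q j = Qfun lam j

/-- `T` is the permutation `T_λ` : the bijection mapping `λ⁻` onto `λ⁺` in an
order-preserving way and the complement of `λ⁻` onto the complement of `λ⁺` in an
order-preserving way. -/
def IsT (lam : NCP n) (T : Equiv.Perm (Fin n)) : Prop :=
  (∀ j, j ∈ rpos lam ↔ T j ∈ lpos lam) ∧
  (∀ j j', j ∈ rpos lam → j' ∈ rpos lam → j < j' → T j < T j') ∧
  (∀ j j', j ∉ rpos lam → j' ∉ rpos lam → j < j' → T j < T j')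

end NCP

/-- Weak excedance positions `E_pos(w) = {i : i ≤ w(i)}`. -/
def ExcPos {n : ℕ} (w : Equiv.Perm (Fin n)) : Finset (Fin n) :=
  Finset.univ.filter fun i => i ≤ w i

/-- Weak excedance values `E_val(w) = {w(i) : i ≤ w(i)}`. -/
def ExcVal {n : ℕ} (w : Equiv.Perm (Fin n)) : Finset (Fin n) :=
  (ExcPos w).image w

/-- The excedance relation `∼`. -/
def ExcEq {n : ℕ} (v w : Equiv.Perm (Fin n)) : Prop :=
  ExcVal v = ExcVal w ∧ ExcPos v = ExcPos w

/-- The excedance relation as a setoid on `S_n`. -/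
def excSetoid (n : ℕ) : Setoid (Equiv.Perm (Fin n)) where
  r := ExcEq
  iseqv := ⟨fun _ => ⟨rfl, rfl⟩, fun h => ⟨h.1.symm, h.2.symm⟩,
    fun h h' => ⟨h.1.trans h'.1, h.2.trans h'.2⟩⟩

namespace NCP

/-- The excedance class `C_λ`. -/
def Cset {n : ℕ} (lam : NCP n) : Set (Equiv.Perm (Fin n)) :=
  {w | ExcVal w = Finset.univ \ lpos lam ∧ ExcPos w = Finset.univ \ rpos lam}

end NCP

/-- Number of inversions of a permutation. -/
def bruhatLen {n : ℕ} (w : Equiv.Perm (Fin n)) : ℕ :=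
  (Finset.univ.filter fun p : Fin n × Fin n => p.1 < p.2 ∧ w p.2 < w p.1).card

/-- The Bruhat order on `S_n` : generated by `v < w` whenever `w v⁻¹` is a
transposition and `ℓ(v) < ℓ(w)`. -/
def BruhatLE {n : ℕ} (v w : Equiv.Perm (Fin n)) : Prop :=
  Relation.ReflTransGen (fun a b => (b * a⁻¹).IsSwap ∧ bruhatLen a < bruhatLen b) v w

/-- Strict Bruhat order. -/
def BruhatLT {n : ℕ} (v w : Equiv.Perm (Fin n)) : Prop :=
  BruhatLE v w ∧ v ≠ w

/-- `λ` is covered by `μ` : `λ` is obtained from `μ` by removing an arc `(i, i+1)`,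
or by replacing an arc `(i,k)` by two arcs `(i,j)`, `(j,k)` with `i < j < k`
(validity of the result is enforced by `λ` being a noncrossing partition). -/
def NCPCovBy {n : ℕ} (lam mu : NCP n) : Prop :=
  (∃ i j : Fin n, (j : ℕ) = (i : ℕ) + 1 ∧ (i, j) ∈ mu.1 ∧ lam.1 = mu.1.erase (i, j)) ∨
  (∃ i j k : Fin n, i < j ∧ j < k ∧ (i, k) ∈ mu.1 ∧
      lam.1 = insert (i, j) (insert (j, k) (mu.1.erase (i, k))))

/-- The partial order `⪯` on noncrossing partitions generated by the covering relation. -/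
def NCPle {n : ℕ} (lam mu : NCP n) : Prop :=
  Relation.ReflTransGen (fun a b => NCPCovBy a b) lam mu

/-- The defining relations of the Temperley–Lieb algebra `TL_n(2)`. -/
inductive TLRel (n : ℕ) : FreeAlgebra ℂ (Fin (n - 1)) → FreeAlgebra ℂ (Fin (n - 1)) → Prop
  | sq (i : Fin (n - 1)) :
      TLRel n (FreeAlgebra.ι ℂ i * FreeAlgebra.ι ℂ i) (2 * FreeAlgebra.ι ℂ i)
  | far (i j : Fin (n - 1)) (h : (i : ℕ) + 1 < (j : ℕ) ∨ (j : ℕ) + 1 < (i : ℕ)) :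
      TLRel n (FreeAlgebra.ι ℂ i * FreeAlgebra.ι ℂ j) (FreeAlgebra.ι ℂ j * FreeAlgebra.ι ℂ i)
  | near (i j : Fin (n - 1)) (h : (i : ℕ) + 1 = (j : ℕ) ∨ (j : ℕ) + 1 = (i : ℕ)) :
      TLRel n (FreeAlgebra.ι ℂ i * FreeAlgebra.ι ℂ j * FreeAlgebra.ι ℂ i) (FreeAlgebra.ι ℂ i)

/-- The Temperley–Lieb algebra `TL_n(2)`. -/
abbrev TL (n : ℕ) := RingQuot (TLRel n)

/-- The generator `e_i` of `TL_n(2)`. -/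
def TLgen (n : ℕ) (i : Fin (n - 1)) : TL n :=
  RingQuot.mkAlgHom ℂ (TLRel n) (FreeAlgebra.ι ℂ i)

/-- The simple transposition `s_i = (i, i+1)` in `S_n`. -/
def simpleTransposition (n : ℕ) (i : Fin (n - 1)) : Equiv.Perm (Fin n) :=
  Equiv.swap ⟨i.val, lt_of_lt_of_le i.isLt (Nat.sub_le n 1)⟩
    ⟨i.val + 1, by have h := i.isLt; omega⟩

open MvPolynomial

/-- The monomial quasisymmetric polynomial `M_α` in `n` variables,
for a composition `α = (α 0, …, α (k-1))`. -/
noncomputable def Mpoly (n k : ℕ) (α : Fin k → ℕ) : MvPolynomial (Fin n) ℚ :=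
  ∑ c ∈ Finset.univ.filter (fun c : Fin k → Fin n => StrictMono c),
    ∏ s : Fin k, X (c s) ^ α s

/-- The vanishing polynomial `P_α`.  The sum over pairs (a coarsening `β ⪰ α` with
blocks witnessed by `1 = f_1 < ⋯ < f_{ℓ+1} = k+1`, and indices `i_1 < ⋯ < i_ℓ`)
is re-indexed by monotone maps `c : Fin k → Fin n`: the fibers of `c` are the blocks of
the coarsening, and `c` sends the `j`-th block to `i_j`.  The variable with 1-based label
`i` is `x_i`, so the rational constant attached to `c s : Fin n` is `(c s : ℕ) + 1`. -/
noncomputable def Ppoly (n k : ℕ) (α : Fin k → ℕ) : MvPolynomial (Fin n) ℚ :=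
  ∑ c ∈ Finset.univ.filter (fun c : Fin k → Fin n => Monotone c),
    ∏ s : Fin k,
      if ∀ t, t < s → c t < c s then
        X (c s) ^ α s - C ((((c s : ℕ) : ℚ) + 1) ^ α s)
      else C ((-(((c s : ℕ) : ℚ) + 1)) ^ α s)

/-- The top-degree homogeneous component `h(f)`. -/
noncomputable def topHom {n : ℕ} (f : MvPolynomial (Fin n) ℚ) : MvPolynomial (Fin n) ℚ :=
  MvPolynomial.homogeneousComponent f.totalDegree f

/-- The set `QSV_n ⊆ S_n`. -/
def QSVset (n : ℕ) : Set (Equiv.Perm (Fin n)) := {σ | ∃ lam : NCP n, NCP.IsQ lam σ}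

/-- The point `(σ(1), …, σ(n)) ∈ ℚⁿ` associated to a permutation (1-based labels). -/
def permPoint {n : ℕ} (σ : Equiv.Perm (Fin n)) : Fin n → ℚ := fun i => ((σ i : ℕ) : ℚ) + 1

/-- `QSV_n` as a set of points in `ℚⁿ`. -/
def QSVpoints (n : ℕ) : Set (Fin n → ℚ) := {p | ∃ σ ∈ QSVset n, p = permPoint σ}

/-- The vanishing ideal of a set of points in `ℚⁿ`. -/
noncomputable def vanishingIdeal (n : ℕ) (S : Set (Fin n → ℚ)) :
    Ideal (MvPolynomial (Fin n) ℚ) where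
  carrier := {f | ∀ p ∈ S, MvPolynomial.eval p f = 0}
  add_mem' := by
    intro a b ha hb p hp
    simp [map_add, ha p hp, hb p hp]
  zero_mem' := by
    intro p hp
    simp
  smul_mem' := by
    intro c f hf p hp
    simp [smul_eq_mul, map_mul, hf p hp]

/-- The monomial quasisymmetric polynomials `M_α` for nonempty compositions `α`
with `ℓ(α) ≤ n`. -/
def MpolySet (n : ℕ) : Set (MvPolynomial (Fin n) ℚ) :=
  {f | ∃ k, ∃ α : Fin k → ℕ, 0 < k ∧ k ≤ n ∧ (∀ s, 0 < α s) ∧ f = Mpoly n k α}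

/-- The vanishing polynomials `P_α` for nonempty compositions `α` with `ℓ(α) ≤ n`. -/
def PpolySet (n : ℕ) : Set (MvPolynomial (Fin n) ℚ) :=
  {f | ∃ k, ∃ α : Fin k → ℕ, 0 < k ∧ k ≤ n ∧ (∀ s, 0 < α s) ∧ f = Ppoly n k α}

/-- The space `QSym_n` of quasisymmetric polynomials : the span of `1` and the `M_α`. -/
def QSym (n : ℕ) : Submodule ℚ (MvPolynomial (Fin n) ℚ) :=
  Submodule.span ℚ (insert 1 (MpolySet n))

/-- `QSym_n⁺` : quasisymmetric polynomials with zero constant term. -/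
def QSymPlus (n : ℕ) : Set (MvPolynomial (Fin n) ℚ) :=
  {f | f ∈ QSym n ∧ MvPolynomial.constantCoeff f = 0}

/-- `gr(I) = ⟨h(f) : f ∈ I⟩`. -/
noncomputable def grIdeal (n : ℕ) (I : Ideal (MvPolynomial (Fin n) ℚ)) :
    Ideal (MvPolynomial (Fin n) ℚ) :=
  Ideal.span (topHom '' (I : Set (MvPolynomial (Fin n) ℚ)))

/-!
An excedance class is determined by the complements of `E_pos` and `E_val`: the drop positions
`M = {i | w i < i}` and the drop values `P = w(M)`. The pairs `(P, M)` so obtained are exactly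
the ballot pairs: `#P = #M` and, for every `x`, at most `#{p ∈ P | p < x}` elements of `M` are
`≤ x` (send each drop position to its value). Conversely, matching `M` with `P` and `Mᶜ` with
`Pᶜ` in increasing order realizes a ballot pair: the ballot condition is exactly what makes the
first matching decrease and the second one weakly increase.

The endpoint sets `(λ⁺, λ⁻)` of a noncrossing partition form a ballot pair, and every ballot
pair comes from exactly one noncrossing partition: the smallest right endpoint `m` has to be
joined to the largest left endpoint below `m`, and removing that arc leaves a smaller instance.
Hence `λ ↦ C_λ` is a bijection onto the excedance classes.

For the count, writing the two steps `(x ∈ M ? D : U) (x ∈ P ? U : D)` for each position `x`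
turns the ballot pairs of size `n` bijectively into the Dyck words of semilength `n`.
-/

open Finset

namespace Finset

theorem image_erase_of_injOn {α β : Type*} [DecidableEq α] [DecidableEq β] {f : α → β}
    {s : Finset α} (hf : Set.InjOn f s) {a : α} (ha : a ∈ s) :
    (s.erase a).image f = (s.image f).erase (f a) := by
  ext b
  simp only [mem_image, mem_erase]
  constructor
  · rintro ⟨c, ⟨hca, hc⟩, rfl⟩
    exact ⟨fun h => hca (hf hc ha h), c, hc, rfl⟩
  · rintro ⟨hb, c, hc, rfl⟩
    exact ⟨c, ⟨fun h => hb (h ▸ rfl), hc⟩, rfl⟩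

theorem card_filter_compl_add {α : Type*} [DecidableEq α] [Fintype α] (s : Finset α)
    (p : α → Prop) [DecidablePred p] :
    #{y ∈ sᶜ | p y} + #{y ∈ s | p y} = #{y | p y} := by
  rw [← card_union_of_disjoint (disjoint_filter_filter disjoint_compl_left), ← filter_union,
    union_comm, union_compl]

section LinearOrder

variable {α : Type*} [LinearOrder α]

theorem card_filter_lt_orderEmbOfFin (s : Finset α) {k : ℕ} (h : #s = k) (i : Fin k) :
    #{y ∈ s | y < s.orderEmbOfFin h i} = i := by
  have hs := s.image_orderEmbOfFin_univ h
  generalize s.orderEmbOfFin h = e at hs ⊢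
  rw [← hs, filter_image, card_image_of_injective _ e.injective]
  simp [filter_gt_eq_Iio]

theorem card_filter_le_orderEmbOfFin (s : Finset α) {k : ℕ} (h : #s = k) (i : Fin k) :
    #{y ∈ s | y ≤ s.orderEmbOfFin h i} = i + 1 := by
  have hs := s.image_orderEmbOfFin_univ h
  generalize s.orderEmbOfFin h = e at hs ⊢
  rw [← hs, filter_image, card_image_of_injective _ e.injective]
  simp [filter_ge_eq_Iic]

def orderIsoOfCardEq (s t : Finset α) (h : #s = #t) : s ≃o t :=
  (s.orderIsoOfFin rfl).symm.trans (t.orderIsoOfFin h.symm)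

variable {s t : Finset α} (hst : #s = #t)

theorem orderIsoOfCardEq_apply (i : Fin #s) :
    (s.orderIsoOfCardEq t hst (s.orderIsoOfFin rfl i) : α) = t.orderEmbOfFin hst.symm i := by
  simp [orderIsoOfCardEq]

theorem orderIsoOfCardEq_lt (h : ∀ x, #{y ∈ s | y ≤ x} ≤ #{y ∈ t | y < x}) (a : s) :
    (s.orderIsoOfCardEq t hst a : α) < a := by
  obtain ⟨i, rfl⟩ := (s.orderIsoOfFin rfl).surjective a
  rw [orderIsoOfCardEq_apply, coe_orderIsoOfFin_apply]
  by_contra! hle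
  have hcount := h (s.orderEmbOfFin rfl i)
  have hmono : #{y ∈ t | y < s.orderEmbOfFin rfl i} ≤ #{y ∈ t | y < t.orderEmbOfFin hst.symm i} :=
    card_le_card (monotone_filter_right _ fun _ _ hy => hy.trans_le hle)
  rw [card_filter_le_orderEmbOfFin] at hcount
  rw [card_filter_lt_orderEmbOfFin] at hmono
  omega

theorem le_orderIsoOfCardEq (h : ∀ x, #{y ∈ t | y ≤ x} ≤ #{y ∈ s | y ≤ x}) (a : s) :
    (a : α) ≤ s.orderIsoOfCardEq t hst a := by
  obtain ⟨i, rfl⟩ := (s.orderIsoOfFin rfl).surjective a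
  rw [orderIsoOfCardEq_apply, coe_orderIsoOfFin_apply]
  by_contra! hlt
  have hcount := h (t.orderEmbOfFin hst.symm i)
  have hmono : #{y ∈ s | y ≤ t.orderEmbOfFin hst.symm i} ≤ #{y ∈ s | y < s.orderEmbOfFin rfl i} :=
    card_le_card (monotone_filter_right _ fun _ _ hy => hy.trans_lt hlt)
  rw [card_filter_le_orderEmbOfFin] at hcount
  rw [card_filter_lt_orderEmbOfFin] at hmono
  omega

end LinearOrder

theorem card_filter_lt_add_one (S : Finset ℕ) (k : ℕ) :
    #{x ∈ S | x < k + 1} = #{x ∈ S | x < k} + if k ∈ S then 1 else 0 := by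
  have : ({x ∈ S | x < k + 1} : Finset ℕ) = {x ∈ S | x < k} ∪ {x ∈ S | x = k} := by
    ext x; simp [le_iff_lt_or_eq, and_or_left]
  rw [this, card_union_of_disjoint (disjoint_filter.mpr fun x _ hx => hx.ne), filter_eq']
  split_ifs <;> rfl

end Finset

section BallotPair

variable {α : Type*} [LinearOrder α]

def IsBallotPair (P M : Finset α) : Prop :=
  #P = #M ∧ ∀ x, #{y ∈ M | y ≤ x} ≤ #{y ∈ P | y < x}

namespace IsBallotPair

theorem erase {P M : Finset α} (h : IsBallotPair P M)
    {q m : α} (hq : q ∈ P) (hm : m ∈ M) (hqm : q < m) (hmin : ∀ y ∈ M, m ≤ y) :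
    IsBallotPair (P.erase q) (M.erase m) := by
  refine ⟨by rw [card_erase_of_mem hq, card_erase_of_mem hm, h.1], fun x => ?_⟩
  rcases lt_or_ge x m with hxm | hmx
  · rw [filter_eq_empty_iff.mpr fun y hy hyx => ?_, card_empty]
    · exact Nat.zero_le _
    · exact absurd (hmin y (mem_of_mem_erase hy)) (not_le.mpr (hyx.trans_lt hxm))
  · rw [filter_erase, filter_erase, card_erase_of_mem (mem_filter.mpr ⟨hm, hmx⟩),
      card_erase_of_mem (mem_filter.mpr ⟨hq, hqm.trans_le hmx⟩ : q ∈ P.filter (· < x))]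
    exact Nat.sub_le_sub_right (h.2 x) 1

theorem card_filter_compl_le [Fintype α] {P M : Finset α} (h : IsBallotPair P M) (x : α) :
    #{y ∈ Pᶜ | y ≤ x} ≤ #{y ∈ Mᶜ | y ≤ x} := by
  have hP := card_filter_compl_add P (· ≤ x)
  have hM := card_filter_compl_add M (· ≤ x)
  have hPM : #{y ∈ P | y < x} ≤ #{y ∈ P | y ≤ x} :=
    card_le_card (monotone_filter_right _ fun _ _ hy => le_of_lt hy)
  have := h.2 x
  omega

end IsBallotPair

variable [Fintype α]

namespace Equiv.Perm

def dropPos (w : Perm α) : Finset α := {i | w i < i}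

def dropVal (w : Perm α) : Finset α := w.dropPos.image w

theorem isBallotPair_dropVal_dropPos (w : Perm α) : IsBallotPair w.dropVal w.dropPos := by
  refine ⟨card_image_of_injective _ w.injective, fun x => ?_⟩
  rw [dropVal, filter_image, card_image_of_injective _ w.injective]
  refine card_le_card (monotone_filter_right _ fun i hi hix => ?_)
  exact (mem_filter.mp hi).2.trans_le hix

end Equiv.Perm

theorem IsBallotPair.exists_perm {P M : Finset α} (h : IsBallotPair P M) :
    ∃ w : Equiv.Perm α, w.dropVal = P ∧ w.dropPos = M := by
  have hc : #Mᶜ = #Pᶜ := by rw [card_compl, card_compl, h.1]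
  let e : M ≃o P := M.orderIsoOfCardEq P h.1.symm
  let e' : ↥(Mᶜ) ≃o ↥(Pᶜ) := Mᶜ.orderIsoOfCardEq Pᶜ hc
  let w : Equiv.Perm α := Equiv.subtypeCongr e.toEquiv
    (((Equiv.subtypeEquivRight fun _ => mem_compl).symm.trans e'.toEquiv).trans
      (Equiv.subtypeEquivRight fun _ => mem_compl))
  have hw_mem : ∀ j (hj : j ∈ M), w j = e ⟨j, hj⟩ := by
    intro j hj; simp [w, Equiv.subtypeCongr, hj]
  have hw_nmem : ∀ j (hj : j ∉ M), w j = e' ⟨j, mem_compl.mpr hj⟩ := by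
    intro j hj; simp [w, Equiv.subtypeCongr, hj]; rfl
  have hdrop : w.dropPos = M := by
    ext j
    simp only [Equiv.Perm.dropPos, mem_filter, mem_univ, true_and]
    by_cases hj : j ∈ M
    · simpa [hw_mem j hj, hj] using Finset.orderIsoOfCardEq_lt h.1.symm h.2 ⟨j, hj⟩
    · simpa [hw_nmem j hj, hj] using
        Finset.le_orderIsoOfCardEq hc h.card_filter_compl_le ⟨j, mem_compl.mpr hj⟩
  refine ⟨w, ?_, hdrop⟩
  rw [Equiv.Perm.dropVal, hdrop]
  refine eq_of_subset_of_card_le (fun v hv => ?_) ?_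
  · obtain ⟨j, hj, rfl⟩ := mem_image.mp hv
    rw [hw_mem j hj]
    exact (e ⟨j, hj⟩).2
  · rw [card_image_of_injective _ w.injective, h.1]

end BallotPair

namespace IsNCP

variable {n : ℕ} {A B : Finset (Fin n × Fin n)}

theorem fst_injOn (hA : IsNCP n A) : Set.InjOn Prod.fst (A : Set (Fin n × Fin n)) := by
  intro a ha b hb h
  by_contra hne
  rcases le_total a.2 b.2 with hle | hle
  · exact hA.2 a ha b hb hne ⟨h.le, h ▸ hA.1 a ha, hle⟩
  · exact hA.2 b hb a ha (Ne.symm hne) ⟨h.ge, h ▸ hA.1 b hb, hle⟩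

theorem snd_injOn (hA : IsNCP n A) : Set.InjOn Prod.snd (A : Set (Fin n × Fin n)) := by
  intro a ha b hb h
  by_contra hne
  rcases le_total a.1 b.1 with hle | hle
  · exact hA.2 a ha b hb hne ⟨hle, h ▸ hA.1 b hb, h.le⟩
  · exact hA.2 b hb a ha (Ne.symm hne) ⟨hle, h ▸ hA.1 a ha, h.ge⟩

theorem mono (hA : IsNCP n A) (h : B ⊆ A) : IsNCP n B :=
  ⟨fun a ha => hA.1 a (h ha), fun a ha b hb => hA.2 a (h ha) b (h hb)⟩

protected theorem insert (hA : IsNCP n A) {q m : Fin n} (hqm : q < m) (hm : ∀ a ∈ A, m < a.2)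
    (hq : ∀ a ∈ A, a.1 < m → a.1 < q) : IsNCP n (insert (q, m) A) := by
  refine ⟨?_, ?_⟩
  · simp only [mem_insert, forall_eq_or_imp]
    exact ⟨hqm, hA.1⟩
  · simp only [mem_insert, forall_eq_or_imp]
    refine ⟨⟨fun h => absurd rfl h, fun a ha _ hcross => ?_⟩, fun a ha => ⟨fun _ hcross => ?_, ?_⟩⟩
    · exact absurd hcross.1 (not_le.mpr (hq a ha hcross.2.1))
    · exact absurd hcross.2.2 (not_le.mpr (hm a ha))
    · exact fun b hb => hA.2 a ha b hb

theorem le_fst_of_lt_minimal_snd (hA : IsNCP n A) {a : Fin n × Fin n} (ha : a ∈ A)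
    (hmin : ∀ y ∈ A.image Prod.snd, a.2 ≤ y) {p : Fin n} (hp : p ∈ A.image Prod.fst)
    (hpa : p < a.2) : p ≤ a.1 := by
  obtain ⟨c, hc, rfl⟩ := mem_image.mp hp
  by_contra! hlt
  exact hA.2 a ha c hc (fun h => hlt.ne (congrArg Prod.fst h)) ⟨hlt.le, hpa,
    hmin c.2 (mem_image_of_mem _ hc)⟩

theorem isBallotPair (hA : IsNCP n A) : IsBallotPair (A.image Prod.fst) (A.image Prod.snd) := by
  refine ⟨by rw [card_image_of_injOn hA.fst_injOn, card_image_of_injOn hA.snd_injOn], fun x => ?_⟩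
  rw [filter_image, filter_image, card_image_of_injOn (hA.snd_injOn.mono (filter_subset _ _)),
    card_image_of_injOn (hA.fst_injOn.mono (filter_subset _ _))]
  exact card_le_card (monotone_filter_right _ fun a ha hax => (hA.1 a ha).trans_le hax)

theorem eq_of_image_eq (hA : IsNCP n A) (hB : IsNCP n B)
    (hfst : A.image Prod.fst = B.image Prod.fst) (hsnd : A.image Prod.snd = B.image Prod.snd) :
    A = B := by
  induction A using Finset.strongInduction generalizing B with
  | H A ih =>
  rcases A.eq_empty_or_nonempty with rfl | hAne
  · rw [image_empty, eq_comm, image_eq_empty] at hsnd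
    exact hsnd.symm
  obtain ⟨a, ha, hmin⟩ := A.exists_min_image Prod.snd hAne
  have hminA : ∀ y ∈ A.image Prod.snd, a.2 ≤ y := forall_mem_image.mpr hmin
  obtain ⟨b, hb, hba⟩ := mem_image.mp (hsnd ▸ mem_image_of_mem Prod.snd ha)
  have hminB : ∀ y ∈ B.image Prod.snd, b.2 ≤ y := hba ▸ hsnd ▸ hminA
  have hab : a = b := by
    refine Prod.ext (le_antisymm ?_ ?_) hba.symm
    · exact hB.le_fst_of_lt_minimal_snd hb hminB (hfst ▸ mem_image_of_mem _ ha)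
        (hba ▸ hA.1 a ha)
    · exact hA.le_fst_of_lt_minimal_snd ha hminA (hfst ▸ mem_image_of_mem _ hb)
        (hba.symm ▸ hB.1 b hb)
  subst hab
  have herase : A.erase a = B.erase a :=
    ih _ (erase_ssubset ha) (hA.mono (erase_subset _ _)) (hB.mono (erase_subset _ _))
      (by rw [image_erase_of_injOn hA.fst_injOn ha, image_erase_of_injOn hB.fst_injOn hb, hfst])
      (by rw [image_erase_of_injOn hA.snd_injOn ha, image_erase_of_injOn hB.snd_injOn hb, hsnd])
  rw [← insert_erase ha, ← insert_erase hb, herase]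

end IsNCP

theorem IsBallotPair.exists_isNCP {n : ℕ} {P M : Finset (Fin n)} (h : IsBallotPair P M) :
    ∃ A, IsNCP n A ∧ A.image Prod.fst = P ∧ A.image Prod.snd = M := by
  induction M using Finset.strongInduction generalizing P with
  | H M ih =>
  rcases M.eq_empty_or_nonempty with rfl | hM
  · have hP : P = ∅ := card_eq_zero.mp (h.1.trans card_empty)
    exact ⟨∅, ⟨by simp, by simp⟩, by rw [image_empty, hP], image_empty _⟩
  set m := M.min' hM
  have hm : m ∈ M := M.min'_mem hM
  have hmin : ∀ y ∈ M, m ≤ y := fun y hy => M.min'_le y hy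
  have hlt : ({p ∈ P | p < m} : Finset _).Nonempty :=
    card_pos.mp ((card_pos.mpr ⟨m, mem_filter.mpr ⟨hm, le_rfl⟩⟩ :
      0 < #{y ∈ M | y ≤ m}).trans_le (h.2 m))
  set q := ({p ∈ P | p < m} : Finset _).max' hlt
  obtain ⟨hq, hqm⟩ := mem_filter.mp (max'_mem _ hlt)
  obtain ⟨A, hA, hfst, hsnd⟩ := ih _ (erase_ssubset hm) (h.erase hq hm hqm hmin)
  refine ⟨insert (q, m) A, hA.insert hqm (fun a ha => ?_) (fun a ha ham => ?_), ?_, ?_⟩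
  · have ha2 : a.2 ∈ M.erase m := hsnd ▸ mem_image_of_mem _ ha
    exact lt_of_le_of_ne (hmin _ (mem_of_mem_erase ha2)) (ne_of_mem_erase ha2).symm
  · have ha1 : a.1 ∈ P.erase q := hfst ▸ mem_image_of_mem _ ha
    exact lt_of_le_of_ne (le_max' _ _ (mem_filter.mpr ⟨mem_of_mem_erase ha1, ham⟩))
      (ne_of_mem_erase ha1)
  · rw [image_insert, hfst, insert_erase hq]
  · rw [image_insert, hsnd, insert_erase hm]

section BallotWord

open DyckStep

variable (P M : Finset ℕ)

def ballotWord : ℕ → List DyckStep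
  | 0 => []
  | k + 1 => ballotWord k ++ [if k ∈ M then D else U, if k ∈ P then U else D]

theorem length_ballotWord (k : ℕ) : (ballotWord P M k).length = 2 * k := by
  induction k with
  | zero => rfl
  | succ k ih => simp [ballotWord, ih]; ring

theorem count_U_ballotWord (k : ℕ) :
    (ballotWord P M k).count U + #{x ∈ M | x < k} = k + #{x ∈ P | x < k} := by
  induction k with
  | zero => simp [ballotWord]
  | succ k ih =>
    simp only [ballotWord, List.count_append, card_filter_lt_add_one]
    split_ifs <;> simp <;> omega

theorem count_D_ballotWord (k : ℕ) :
    (ballotWord P M k).count D + #{x ∈ P | x < k} = k + #{x ∈ M | x < k} := by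
  induction k with
  | zero => simp [ballotWord]
  | succ k ih =>
    simp only [ballotWord, List.count_append, card_filter_lt_add_one]
    split_ifs <;> simp <;> omega

theorem take_ballotWord {x k : ℕ} (hxk : x ≤ k) :
    (ballotWord P M k).take (2 * x) = ballotWord P M x := by
  induction k with
  | zero => rw [Nat.le_zero.mp hxk]; rfl
  | succ k ih =>
    rcases hxk.lt_or_eq with hlt | rfl
    · rw [ballotWord, List.take_append, length_ballotWord, Nat.sub_eq_zero_of_le (by omega),
        List.take_zero, List.append_nil, ih (by omega)]
    · exact List.take_of_length_le (length_ballotWord P M _).le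

theorem take_ballotWord_add_one {x k : ℕ} (hxk : x < k) :
    (ballotWord P M k).take (2 * x + 1) = ballotWord P M x ++ [if x ∈ M then D else U] := by
  have h : (ballotWord P M k).take (2 * (x + 1)) = _ := take_ballotWord P M hxk
  rw [← min_eq_left (by omega : 2 * x + 1 ≤ 2 * (x + 1)), ← List.take_take, h, ballotWord,
    List.take_append, List.take_of_length_le (by rw [length_ballotWord]; omega),
    length_ballotWord]
  simp

theorem count_D_le_count_U_ballotWord_iff (x : ℕ) :
    (ballotWord P M x).count D ≤ (ballotWord P M x).count U ↔
      #{y ∈ M | y < x} ≤ #{y ∈ P | y < x} := by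
  have := count_U_ballotWord P M x
  have := count_D_ballotWord P M x
  omega

theorem count_D_le_count_U_ballotWord_append_iff (x : ℕ) :
    (ballotWord P M x ++ [if x ∈ M then D else U]).count D ≤
        (ballotWord P M x ++ [if x ∈ M then D else U]).count U ↔
      #{y ∈ M | y < x + 1} ≤ #{y ∈ P | y < x} := by
  have := count_U_ballotWord P M x
  have := count_D_ballotWord P M x
  rw [card_filter_lt_add_one]
  split_ifs <;> simp <;> omega

theorem ballotWord_dyck_iff (k : ℕ) :
    (∀ i, ((ballotWord P M k).take i).count D ≤ ((ballotWord P M k).take i).count U) ↔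
      ∀ x < k, #{y ∈ M | y < x + 1} ≤ #{y ∈ P | y < x} := by
  constructor
  · intro h x hx
    have := h (2 * x + 1)
    rwa [take_ballotWord_add_one P M hx, count_D_le_count_U_ballotWord_append_iff] at this
  · intro h i
    have heven : ∀ x ≤ k, #{y ∈ M | y < x} ≤ #{y ∈ P | y < x} := by
      rintro (_ | x) hx
      · simp
      · exact (h x hx).trans
          (card_le_card (monotone_filter_right _ fun _ _ hy => hy.trans x.lt_succ_self))
    obtain ⟨x, rfl | rfl⟩ := Nat.even_or_odd' i
    · rcases le_or_gt x k with hx | hx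
      · rw [take_ballotWord P M hx, count_D_le_count_U_ballotWord_iff]
        exact heven x hx
      · rw [List.take_of_length_le (by rw [length_ballotWord]; omega),
          count_D_le_count_U_ballotWord_iff]
        exact heven k le_rfl
    · rcases lt_or_ge x k with hx | hx
      · rw [take_ballotWord_add_one P M hx, count_D_le_count_U_ballotWord_append_iff]
        exact h x hx
      · rw [List.take_of_length_le (by rw [length_ballotWord]; omega),
          count_D_le_count_U_ballotWord_iff]
        exact heven k le_rfl

variable {P M} in
theorem ballotWord_eq_iff {P' M' : Finset ℕ} {k : ℕ} :
    ballotWord P M k = ballotWord P' M' k ↔ ∀ x < k, (x ∈ P ↔ x ∈ P') ∧ (x ∈ M ↔ x ∈ M') := by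
  refine ⟨fun h x hx => ?_, fun h => ?_⟩
  · have hx' := congrArg (List.take (2 * (x + 1))) h
    rw [take_ballotWord _ _ hx, take_ballotWord _ _ hx, ballotWord, ballotWord] at hx'
    have := (List.append_inj' hx' rfl).2
    split_ifs at this <;> simp_all
  · induction k with
    | zero => rfl
    | succ k ih =>
      obtain ⟨hP, hM⟩ := h k k.lt_succ_self
      rw [ballotWord, ballotWord, ih fun x hx => h x (hx.trans k.lt_succ_self)]
      simp only [hP, hM]

theorem ballotWord_eq_take (l : List DyckStep) {k : ℕ} (hk : 2 * k ≤ l.length) :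
    ballotWord {x ∈ range l.length | l[2 * x + 1]? = some U}
      {x ∈ range l.length | l[2 * x]? = some D} k = l.take (2 * k) := by
  induction k with
  | zero => rfl
  | succ k ih =>
    obtain ⟨a, ha⟩ : ∃ a, l[2 * k]? = some a := ⟨_, List.getElem?_eq_getElem (by omega)⟩
    obtain ⟨b, hb⟩ : ∃ b, l[2 * k + 1]? = some b := ⟨_, List.getElem?_eq_getElem (by omega)⟩
    have hk' : k < l.length := by omega
    rw [ballotWord, ih (by omega), show 2 * (k + 1) = 2 * k + 1 + 1 by ring, List.take_add_one,
      List.take_add_one, ha, hb]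
    simp only [mem_filter, mem_range, hk', true_and, ha, hb, Option.some.injEq,
      Option.toList_some, List.append_assoc, List.singleton_append]
    cases a <;> cases b <;> rfl

end BallotWord

section Counting

open DyckStep

def ballotPairs (α : Type*) [LinearOrder α] : Set (Finset α × Finset α) :=
  {pm | IsBallotPair pm.1 pm.2}

variable {n : ℕ}

theorem card_filter_map_valEmbedding (S : Finset (Fin n)) (p : ℕ → Prop) [DecidablePred p] :
    #{y ∈ S.map Fin.valEmbedding | p y} = #(S.filter fun y : Fin n => p y) := by
  rw [filter_map, card_map]
  rfl

def finBallotWord (P M : Finset (Fin n)) : List DyckStep :=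
  ballotWord (P.map Fin.valEmbedding) (M.map Fin.valEmbedding) n

theorem count_U_finBallotWord (P M : Finset (Fin n)) :
    (finBallotWord P M).count U + #M = n + #P := by
  rw [finBallotWord]
  simpa [card_filter_map_valEmbedding, filter_true] using
    count_U_ballotWord (P.map Fin.valEmbedding) (M.map Fin.valEmbedding) n

theorem count_D_finBallotWord (P M : Finset (Fin n)) :
    (finBallotWord P M).count D + #P = n + #M := by
  rw [finBallotWord]
  simpa [card_filter_map_valEmbedding, filter_true] using
    count_D_ballotWord (P.map Fin.valEmbedding) (M.map Fin.valEmbedding) n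

theorem isBallotPair_iff_finBallotWord (P M : Finset (Fin n)) :
    IsBallotPair P M ↔ (finBallotWord P M).count U = (finBallotWord P M).count D ∧
      ∀ i, ((finBallotWord P M).take i).count D ≤ ((finBallotWord P M).take i).count U := by
  have hU := count_U_finBallotWord P M
  have hD := count_D_finBallotWord P M
  refine and_congr (by omega) ?_
  rw [finBallotWord, ballotWord_dyck_iff]
  refine Fin.forall_iff.trans (forall₂_congr fun x hx => ?_)
  simp only [card_filter_map_valEmbedding, Fin.le_def, Fin.lt_def, Nat.lt_add_one_iff]

theorem finBallotWord_inj {P M P' M' : Finset (Fin n)} :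
    finBallotWord P M = finBallotWord P' M' ↔ P = P' ∧ M = M' := by
  refine ⟨fun h => ?_, by rintro ⟨rfl, rfl⟩; rfl⟩
  have hmem := ballotWord_eq_iff.mp h
  constructor <;> ext y
  · simpa [Fin.val_inj] using (hmem y y.2).1
  · simpa [Fin.val_inj] using (hmem y y.2).2

theorem exists_finBallotWord_eq {l : List DyckStep} (hl : l.length = 2 * n) :
    ∃ P M : Finset (Fin n), finBallotWord P M = l := by
  refine ⟨({x | l[2 * (x : ℕ) + 1]? = some U} : Finset (Fin n)),
    ({x | l[2 * (x : ℕ)]? = some D} : Finset (Fin n)), ?_⟩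
  have hdecode := ballotWord_eq_take l hl.ge
  rw [List.take_of_length_le hl.le] at hdecode
  refine (ballotWord_eq_iff.mpr fun x hx => ?_).trans hdecode
  have hxl : x < l.length := by omega
  lift x to Fin n using hx
  simp [hxl, Fin.val_inj]

theorem card_ballotPairs (n : ℕ) : Nat.card (ballotPairs (Fin n)) = catalan n := by
  let toDyckWord (pm : ballotPairs (Fin n)) : {d : DyckWord // d.semilength = n} :=
    have h := (isBallotPair_iff_finBallotWord _ _).mp pm.2
    ⟨⟨finBallotWord pm.1.1 pm.1.2, h.1, h.2⟩, by
      have := count_U_finBallotWord pm.1.1 pm.1.2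
      have := count_D_finBallotWord pm.1.1 pm.1.2
      simp only [DyckWord.semilength]
      omega⟩
  have hbij : Function.Bijective toDyckWord := by
    refine ⟨fun ⟨⟨P, M⟩, _⟩ ⟨⟨P', M'⟩, _⟩ h => ?_, fun ⟨d, hd⟩ => ?_⟩
    · obtain ⟨rfl, rfl⟩ := finBallotWord_inj.mp (congrArg (·.1.toList) h)
      rfl
    · obtain ⟨P, M, hPM⟩ := exists_finBallotWord_eq (hd ▸ d.two_mul_semilength_eq_length).symm
      have hball : IsBallotPair P M := (isBallotPair_iff_finBallotWord P M).mpr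
        ⟨hPM ▸ d.count_U_eq_count_D, hPM ▸ d.count_D_le_count_U⟩
      exact ⟨⟨(P, M), hball⟩, Subtype.ext (DyckWord.ext hPM)⟩
  rw [Nat.card_eq_of_bijective toDyckWord hbij, Nat.card_eq_fintype_card,
    DyckWord.card_dyckWord_semilength_eq_catalan]

end Counting

section Excedance

variable {n : ℕ}

theorem compl_excPos (w : Equiv.Perm (Fin n)) : (ExcPos w)ᶜ = w.dropPos := by
  ext j
  simp [ExcPos, Equiv.Perm.dropPos]

theorem compl_excVal (w : Equiv.Perm (Fin n)) : (ExcVal w)ᶜ = w.dropVal := by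
  ext v
  obtain ⟨j, rfl⟩ := w.surjective v
  simp [ExcVal, ExcPos, Equiv.Perm.dropVal, Equiv.Perm.dropPos, w.injective.eq_iff]

theorem excEq_iff {v w : Equiv.Perm (Fin n)} :
    ExcEq v w ↔ v.dropVal = w.dropVal ∧ v.dropPos = w.dropPos := by
  simp only [ExcEq, ← compl_excVal, ← compl_excPos, compl_inj_iff]

theorem card_quotient_excSetoid (n : ℕ) : Nat.card (Quotient (excSetoid n)) = catalan n := by
  let toBallotPair : Quotient (excSetoid n) → ballotPairs (Fin n) :=
    Quotient.lift (fun w => ⟨(w.dropVal, w.dropPos), w.isBallotPair_dropVal_dropPos⟩)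
      fun v w h => by
        obtain ⟨hval, hpos⟩ := excEq_iff.mp h
        simp only [hval, hpos]
  have hbij : Function.Bijective toBallotPair := by
    refine ⟨fun v w h => ?_, fun ⟨⟨P, M⟩, hPM⟩ => ?_⟩
    · induction v using Quotient.inductionOn
      induction w using Quotient.inductionOn
      refine Quotient.sound (excEq_iff.mpr ?_)
      simpa [toBallotPair] using congrArg (·.1) h
    · obtain ⟨w, hval, hpos⟩ := IsBallotPair.exists_perm hPM
      exact ⟨Quotient.mk _ w, by simp [toBallotPair, hval, hpos]⟩
  rw [Nat.card_eq_of_bijective toBallotPair hbij, card_ballotPairs]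

end Excedance

namespace NCP

variable {n : ℕ}

theorem mem_Cset_iff {lam : NCP n} {w : Equiv.Perm (Fin n)} :
    w ∈ lam.Cset ↔ w.dropVal = lam.lpos ∧ w.dropPos = lam.rpos := by
  simp only [Cset, Set.mem_ofPred_eq, ← compl_eq_univ_sdiff, eq_compl_comm, compl_excVal,
    compl_excPos, eq_comm]

theorem eq_of_mem_Cset {lam mu : NCP n} {w : Equiv.Perm (Fin n)} (hlam : w ∈ lam.Cset)
    (hmu : w ∈ mu.Cset) : lam = mu := by
  rw [mem_Cset_iff] at hlam hmu
  exact Subtype.ext (lam.2.eq_of_image_eq mu.2 (hlam.1.symm.trans hmu.1)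
    (hlam.2.symm.trans hmu.2))

theorem Cset_nonempty (lam : NCP n) : lam.Cset.Nonempty := by
  obtain ⟨w, hval, hpos⟩ := lam.2.isBallotPair.exists_perm
  exact ⟨w, mem_Cset_iff.mpr ⟨hval, hpos⟩⟩

theorem exists_mem_Cset (w : Equiv.Perm (Fin n)) : ∃ lam : NCP n, w ∈ lam.Cset := by
  obtain ⟨A, hA, hfst, hsnd⟩ := w.isBallotPair_dropVal_dropPos.exists_isNCP
  exact ⟨⟨A, hA⟩, mem_Cset_iff.mpr ⟨hfst.symm, hsnd.symm⟩⟩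

theorem Cset_eq_of_mem {lam : NCP n} {w : Equiv.Perm (Fin n)} (hw : w ∈ lam.Cset) :
    lam.Cset = {v | ExcEq v w} := by
  ext v
  rw [Set.mem_ofPred_eq, mem_Cset_iff, excEq_iff, (mem_Cset_iff.mp hw).1, (mem_Cset_iff.mp hw).2]

end NCP

/-- `λ ↦ C_λ` is a bijection from noncrossing partitions of size `n`
to the excedance classes `S_n/∼`; in particular the number of excedance classes is the
`n`-th Catalan number. -/
theorem stmt3 (n : ℕ) :
    (∀ lam : NCP n, (NCP.Cset lam).Nonempty) ∧
    (∀ lam mu : NCP n, lam ≠ mu → Disjoint (NCP.Cset lam) (NCP.Cset mu)) ∧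
    (∀ lam mu : NCP n, NCP.Cset lam = NCP.Cset mu → lam = mu) ∧
    (∀ w : Equiv.Perm (Fin n), ∃ lam : NCP n,
      NCP.Cset lam = {v | ExcEq v w} ∧ w ∈ NCP.Cset lam) ∧
    Nat.card (Quotient (excSetoid n)) = catalan n := by
  refine ⟨NCP.Cset_nonempty, fun lam mu hne => ?_, fun lam mu h => ?_, fun w => ?_,
    card_quotient_excSetoid n⟩
  · exact Set.disjoint_left.mpr fun w hlam hmu => hne (NCP.eq_of_mem_Cset hlam hmu)
  · obtain ⟨w, hw⟩ := lam.Cset_nonempty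
    exact NCP.eq_of_mem_Cset hw (h ▸ hw)
  · obtain ⟨lam, hw⟩ := NCP.exists_mem_Cset w
    exact ⟨lam, NCP.Cset_eq_of_mem hw, hw⟩
end
end

section
/- For every noncrossing partition λ of size n, Q_λ is the Bruhat-maximum element of the excedance class C_λ: Q_λ ∈ C_λ and w ≤ Q_λ in the Bruhat order for every w ∈ C_λ. -/
open scoped Classical

noncomputable section

open MvPolynomial

/-!
Inside an excedance class, swapping the values at positions `a < b` with `w a < w b` raises the
length, and it keeps the class when `a, b` are weak excedances with `b ≤ w a`, or deficiencies
with `w b < a`. When no such swap exists, the excedance arcs `i ↦ w i` are nested, and so are the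
deficiency arcs; like a bracket matching, a nested permutation is determined by its excedance
positions and values (the smallest excedance value belongs to the largest position below it).
Since `λ` is noncrossing, `Q_λ` is nested, so climbing from any `w ∈ C_λ` ends at `Q_λ`.
-/

theorem Relation.reflTransGen_of_exists_step {β : Type*} {R : β → β → Prop} {p : β → Prop}
    {top : β} (μ : β → ℕ) (N : ℕ) (hμ : ∀ x, μ x ≤ N) (hR : ∀ x y, R x y → μ x < μ y)
    (hstep : ∀ x, p x → x ≠ top → ∃ y, p y ∧ R x y) {x : β} (hx : p x) :
    Relation.ReflTransGen R x top := by
  by_cases hxtop : x = top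
  · exact hxtop ▸ .refl
  obtain ⟨y, hy, hxy⟩ := hstep x hx hxtop
  have := hR x y hxy
  have := hμ y
  exact .head hxy (reflTransGen_of_exists_step μ N hμ hR hstep hy)
termination_by N - μ x

section Nested

variable {α : Type*} [LinearOrder α] {r : α → α → Prop} {f g : α → α} {s : Finset α}

/-- The arcs `a ↦ f a`, `a ∈ s`, are nested: an arc starting under the arc of `a`, in the sense of
`r b (f a)`, also ends under it. -/
def NestedOn (r : α → α → Prop) (f : α → α) (s : Finset α) : Prop :=
  ∀ a ∈ s, ∀ b ∈ s, a < b → r b (f a) → f b ≤ f a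

theorem NestedOn.mono {t : Finset α} (h : NestedOn r f t) (hst : s ⊆ t) : NestedOn r f s :=
  fun a ha b hb => h a (hst ha) b (hst hb)

theorem NestedOn.le_of_forall_le (h : NestedOn r f s) (hf : Function.Injective f) {p x : α}
    (hp : p ∈ s) (hmin : ∀ y ∈ s, f p ≤ f y) (hx : x ∈ s) (hrx : r x (f p)) : x ≤ p := by
  by_contra! hpx
  exact hpx.ne' (hf ((h p hp x hx hpx hrx).antisymm (hmin x hx)))

theorem NestedOn.eqOn (hf : Function.Injective f) (hg : Function.Injective g)
    (himg : s.image f = s.image g) (hrf : ∀ x ∈ s, r x (f x)) (hrg : ∀ x ∈ s, r x (g x))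
    (hnf : NestedOn r f s) (hng : NestedOn r g s) : Set.EqOn f g s := by
  induction s using Finset.induction_on_min_value f generalizing g with
  | empty => simp
  | insert a s has hmin ih =>
    have hminf : ∀ y ∈ insert a s, f a ≤ f y := by
      simpa using hmin
    obtain ⟨b, hb, hgb⟩ : ∃ b ∈ insert a s, g b = f a := by
      rw [← Finset.mem_image, ← himg]
      exact Finset.mem_image_of_mem f (Finset.mem_insert_self a s)
    have hming : ∀ y ∈ insert a s, g b ≤ g y := by
      intro y hy
      obtain ⟨z, hz, hzy⟩ := Finset.mem_image.1 (himg ▸ Finset.mem_image_of_mem g hy)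
      rw [hgb, ← hzy]
      exact hminf z hz
    have hba : b ≤ a :=
      hnf.le_of_forall_le hf (Finset.mem_insert_self a s) hminf hb (hgb ▸ hrg b hb)
    have hab : a ≤ b :=
      hng.le_of_forall_le hg hb hming (Finset.mem_insert_self a s)
        (hgb ▸ hrf a (Finset.mem_insert_self a s))
    have hga : g a = f a := le_antisymm hab hba ▸ hgb
    have hs : s.image f = s.image g := by
      rw [← Finset.erase_insert has, Finset.image_erase hf, Finset.image_erase hg, himg, hga]
    have hsub : s ⊆ insert a s := Finset.subset_insert a s
    intro x hx
    rcases Finset.mem_insert.1 hx with rfl | hx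
    · exact hga.symm
    · exact ih hg hs (fun y hy => hrf y (hsub hy)) (fun y hy => hrg y (hsub hy))
        (hnf.mono hsub) (hng.mono hsub) hx

end Nested

section Inversions

open Equiv Finset

variable {n : ℕ}

def inversions (w : Perm (Fin n)) : Finset (Fin n × Fin n) :=
  univ.filter fun p => p.1 < p.2 ∧ w p.2 < w p.1

theorem mem_inversions {w : Perm (Fin n)} {p : Fin n × Fin n} :
    p ∈ inversions w ↔ p.1 < p.2 ∧ w p.2 < w p.1 := by
  simp [inversions]

theorem bruhatLen_lt_mul_swap (w : Perm (Fin n)) {a b : Fin n} (hab : a < b) (hw : w a < w b) :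
    bruhatLen w < bruhatLen (w * swap a b) := by
  set σ := swap a b
  -- Transporting an inversion of `w` along `σ` when this keeps it ordered injects the inversions
  -- of `w` into those of `w * σ` other than `(a, b)`.
  let ψ : Fin n × Fin n → Fin n × Fin n := fun p => if σ p.1 < σ p.2 then (σ p.1, σ p.2) else p
  have hmaps : Set.MapsTo ψ (inversions w) ((inversions (w * σ)).erase (a, b)) := by
    rintro ⟨i, j⟩ hp
    obtain ⟨hij, hwij⟩ : i < j ∧ w j < w i := mem_inversions.1 hp
    simp only [ψ, coe_erase, Set.mem_sdiff, mem_coe, mem_inversions, Set.mem_singleton_iff,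
      Perm.mul_apply]
    split_ifs with h
    · simp only [σ, swap_apply_self, Prod.mk.injEq, swap_apply_eq_iff, swap_apply_left,
        swap_apply_right]
      refine ⟨⟨h, hwij⟩, ?_⟩
      rintro ⟨rfl, rfl⟩
      exact hab.not_gt hij
    · refine ⟨⟨hij, ?_⟩, ?_⟩
      · simp only [σ, swap_apply_def] at h ⊢
        split_ifs at h ⊢ <;> subst_vars <;> omega
      · rintro ⟨⟨⟩⟩
        exact hw.not_gt hwij
  have hinj : Set.InjOn ψ (inversions w) := by
    rintro ⟨i, j⟩ hp ⟨k, l⟩ hq hpq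
    have hij : i < j := (mem_inversions.1 hp).1
    have hkl : k < l := (mem_inversions.1 hq).1
    simp only [ψ] at hpq
    split_ifs at hpq with h1 h2 h2 <;> simp only [Prod.mk.injEq, σ] at hpq ⊢
    · exact ⟨σ.injective hpq.1, σ.injective hpq.2⟩
    · rw [← hpq.1, ← hpq.2, swap_apply_self, swap_apply_self] at h2
      exact absurd hij h2
    · rw [hpq.1, hpq.2, swap_apply_self, swap_apply_self] at h1
      exact absurd hkl h1
    · exact hpq
  have hab_mem : (a, b) ∈ inversions (w * σ) := by
    simpa [mem_inversions, σ, hab] using hw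
  calc bruhatLen w = (inversions w).card := rfl
    _ ≤ ((inversions (w * σ)).erase (a, b)).card := card_le_card_of_injOn ψ hmaps hinj
    _ < (inversions (w * σ)).card := card_erase_lt_of_mem hab_mem
    _ = bruhatLen (w * σ) := rfl

end Inversions

section Excedance

open Equiv Finset

variable {n : ℕ}

theorem mem_excPos {w : Perm (Fin n)} {i : Fin n} : i ∈ ExcPos w ↔ i ≤ w i := by
  simp [ExcPos]

theorem mem_excVal {w : Perm (Fin n)} {v : Fin n} : v ∈ ExcVal w ↔ w⁻¹ v ≤ v := by
  rw [ExcVal, mem_image]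
  constructor
  · rintro ⟨i, hi, rfl⟩
    simpa [mem_excPos] using hi
  · intro h
    exact ⟨w⁻¹ v, by simpa [mem_excPos] using h, by simp⟩

theorem lt_of_mem_compl_excPos {w : Perm (Fin n)} {i : Fin n} (hi : i ∈ univ \ ExcPos w) :
    w i < i :=
  lt_of_not_ge (mem_excPos.not.1 (mem_sdiff.1 hi).2)

theorem image_compl_excPos (w : Perm (Fin n)) : (univ \ ExcPos w).image w = univ \ ExcVal w := by
  rw [image_sdiff_of_injOn w.injective.injOn (subset_univ _), image_univ_equiv, ExcVal]

theorem excEq_mul_swap (w : Perm (Fin n)) {a b : Fin n} (ha : a ≤ w b ↔ a ≤ w a)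
    (hb : b ≤ w a ↔ b ≤ w b) (hab : a ≤ w a ↔ b ≤ w b) : ExcEq (w * swap a b) w := by
  constructor
  · ext v
    obtain ⟨i, rfl⟩ := w.surjective v
    simp only [mem_excVal, mul_inv_rev, swap_inv, Perm.mul_apply, Perm.coe_inv,
      symm_apply_apply, swap_apply_def]
    split_ifs <;> subst_vars <;> tauto
  · ext i
    simp only [mem_excPos, Perm.mul_apply, swap_apply_def]
    split_ifs <;> subst_vars <;> tauto

-- The second condition is `NestedOn (· < ·) w (univ \ ExcPos w)` for the reversed order.
def IsNested (w : Perm (Fin n)) : Prop :=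
  NestedOn (· ≤ ·) w (ExcPos w) ∧
    ∀ a ∈ univ \ ExcPos w, ∀ b ∈ univ \ ExcPos w, a < b → w b < a → w b ≤ w a

theorem exists_excEq_mul_swap_of_not_isNested {w : Perm (Fin n)} (h : ¬ IsNested w) :
    ∃ a b, a < b ∧ w a < w b ∧ ExcEq (w * swap a b) w := by
  simp only [IsNested, NestedOn, mem_sdiff, mem_univ, true_and, mem_excPos, not_and_or] at h
  push Not at h
  rcases h with ⟨a, ha, b, hb, hab, hba, hw⟩ | ⟨a, ha, b, hb, hab, hba, hw⟩
  · exact ⟨a, b, hab, hw, excEq_mul_swap w (iff_of_true (by omega) ha) (iff_of_true hba hb)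
      (iff_of_true ha hb)⟩
  · exact ⟨a, b, hab, hw, excEq_mul_swap w (iff_of_false (by omega) (by omega))
      (iff_of_false (by omega) (by omega)) (iff_of_false (by omega) (by omega))⟩

theorem eq_of_excEq_of_isNested {v w : Perm (Fin n)} (h : ExcEq v w) (hv : IsNested v)
    (hw : IsNested w) : v = w := by
  obtain ⟨hval, hpos⟩ := h
  have himg : (ExcPos w).image v = (ExcPos w).image w := by
    simpa only [ExcVal, hpos] using hval
  have himg' : (univ \ ExcPos w).image v = (univ \ ExcPos w).image w := by
    rw [image_compl_excPos w, ← hpos, image_compl_excPos v, hval]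
  ext1 i
  by_cases hi : i ∈ ExcPos w
  · exact NestedOn.eqOn v.injective w.injective himg (fun x hx => mem_excPos.1 (hpos ▸ hx))
      (fun x hx => mem_excPos.1 hx) (hpos ▸ hv.1) hw.1 hi
  · exact NestedOn.eqOn (α := (Fin n)ᵒᵈ) (r := (· < ·)) (s := univ \ ExcPos w) v.injective
      w.injective himg'
      (fun x hx => lt_of_mem_compl_excPos (hpos ▸ hx)) (fun x hx => lt_of_mem_compl_excPos hx)
      (fun a ha b hb => hv.2 b (hpos ▸ hb) a (hpos ▸ ha))
      (fun a ha b hb => hw.2 b hb a ha) (mem_sdiff.2 ⟨mem_univ i, hi⟩)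

theorem bruhatLE_of_excEq {v w : Perm (Fin n)} (hw : IsNested w) (h : ExcEq v w) :
    BruhatLE v w := by
  refine Relation.reflTransGen_of_exists_step bruhatLen (Fintype.card (Fin n × Fin n))
    (fun u => Finset.card_le_univ _) (fun _ _ h => h.2) (p := (ExcEq · w)) (fun u hu hne => ?_) h
  obtain ⟨a, b, hab, hlt, hswap⟩ :=
    exists_excEq_mul_swap_of_not_isNested fun hnest => hne (eq_of_excEq_of_isNested hu hnest hw)
  refine ⟨u * swap a b, ⟨hswap.1.trans hu.1, hswap.2.trans hu.2⟩,
    ⟨?_, bruhatLen_lt_mul_swap u hab hlt⟩⟩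
  rw [← swap_apply_apply]
  exact ⟨u a, u b, hlt.ne, rfl⟩

end Excedance

namespace NCP

open Finset

variable {n : ℕ} {lam : NCP n}

theorem arc_lt {p : Fin n × Fin n} (hp : p ∈ lam.1) : p.1 < p.2 := lam.2.1 p hp

theorem not_crossing {p q : Fin n × Fin n} (hp : p ∈ lam.1) (hq : q ∈ lam.1) (hpq : p ≠ q)
    (h₁ : p.1 ≤ q.1) (h₂ : q.1 < p.2) (h₃ : p.2 ≤ q.2) : False :=
  lam.2.2 p hp q hq hpq ⟨h₁, h₂, h₃⟩

theorem injOn_fst : Set.InjOn Prod.fst (lam.1 : Set (Fin n × Fin n)) := by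
  intro p hp q hq h
  by_contra hne
  rcases lt_or_gt_of_ne fun h' => hne (Prod.ext h h') with h' | h'
  · exact not_crossing hp hq hne h.le (h ▸ arc_lt hp) h'.le
  · exact not_crossing hq hp (Ne.symm hne) h.ge (h ▸ arc_lt hq) h'.le

theorem injOn_snd : Set.InjOn Prod.snd (lam.1 : Set (Fin n × Fin n)) := by
  intro p hp q hq h
  by_contra hne
  rcases lt_or_gt_of_ne fun h' => hne (Prod.ext h' h) with h' | h'
  · exact not_crossing hp hq hne h'.le (h ▸ arc_lt hq) h.le
  · exact not_crossing hq hp (Ne.symm hne) h'.le (h.symm ▸ arc_lt hp) h.ge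

theorem excEq_of_mem_Cset {v w : Equiv.Perm (Fin n)} (hv : v ∈ Cset lam) (hw : w ∈ Cset lam) :
    ExcEq v w :=
  ⟨hv.1.trans hw.1.symm, hv.2.trans hw.2.symm⟩

theorem card_lpos : (lpos lam).card = (rpos lam).card := by
  rw [lpos, rpos, card_image_of_injOn injOn_fst, card_image_of_injOn injOn_snd]

theorem mem_lpos {i : Fin n} : i ∈ lpos lam ↔ ∃ j, (i, j) ∈ lam.1 := by
  simp [lpos]

theorem mem_rpos {j : Fin n} : j ∈ rpos lam ↔ ∃ i, (i, j) ∈ lam.1 := by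
  simp [rpos]

theorem Connected.symm {x y : Fin n} (h : Connected lam x y) : Connected lam y x := by
  induction h with
  | refl => exact .refl
  | tail _ hyz ih => exact .head hyz.symm ih

theorem connected_compMax (j : Fin n) : Connected lam j (compMax lam j) :=
  (mem_filter.1 (max'_mem _ _)).2

theorem Connected.le_compMax {j z : Fin n} (h : Connected lam j z) : z ≤ compMax lam j :=
  le_max' _ _ (mem_filter.2 ⟨mem_univ z, h⟩)

theorem Connected.compMax_eq {x y : Fin n} (h : Connected lam x y) :
    compMax lam x = compMax lam y := by
  have hc : component lam x = component lam y := by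
    ext z
    simp only [component, mem_filter, mem_univ, true_and]
    exact ⟨h.symm.trans, h.trans⟩
  simp only [compMax, hc]

theorem Connected.exists_arc_across {x y b : Fin n} (h : Connected lam x y) (hxb : x < b)
    (hby : b ≤ y) : ∃ u v, (u, v) ∈ lam.1 ∧ u < b ∧ b ≤ v ∧ Connected lam x u := by
  induction h with
  | refl => exact absurd hby (not_le.2 hxb)
  | @tail c y hxc hcy ih =>
    by_cases hbc : b ≤ c
    · exact ih hbc
    rcases hcy with harc | harc
    · exact ⟨c, y, harc, lt_of_not_ge hbc, hby, hxc⟩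
    · exact absurd (hby.trans (arc_lt harc).le) hbc

/-- Since no two arcs share a right endpoint, a walk leaving a vertex that is not a right
endpoint can be straightened into a path along increasing arcs. -/
theorem Connected.reflTransGen_arc {j z : Fin n} (hj : j ∉ rpos lam) (h : Connected lam j z) :
    Relation.ReflTransGen (fun x y => (x, y) ∈ lam.1) j z := by
  induction h with
  | refl => exact .refl
  | @tail c y _ hcy ih =>
    rcases hcy with harc | harc
    · exact ih.tail harc
    rcases Relation.ReflTransGen.cases_tail ih with rfl | ⟨d, hd, hdc⟩
    · exact absurd (mem_rpos.2 ⟨y, harc⟩) hj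
    · exact (Prod.mk.inj (injOn_snd hdc harc rfl)).1 ▸ hd

theorem Connected.le_of_notMem_rpos {j z : Fin n} (hj : j ∉ rpos lam) (h : Connected lam j z) :
    j ≤ z := by
  have hpath := h.reflTransGen_arc hj
  clear h
  induction hpath with
  | refl => exact le_rfl
  | tail _ harc ih => exact ih.trans (arc_lt harc).le

end NCP

namespace NCP.IsQ

open Finset

variable {n : ℕ} {lam : NCP n} {Q : Equiv.Perm (Fin n)}

theorem arc_of_mem_rpos (hQ : IsQ lam Q) {j : Fin n} (hj : j ∈ rpos lam) : (Q j, j) ∈ lam.1 := by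
  have h := mem_rpos.1 hj
  rw [hQ j, Qfun, dif_pos h]
  exact h.choose_spec

theorem eq_compMax (hQ : IsQ lam Q) {j : Fin n} (hj : j ∉ rpos lam) : Q j = compMax lam j := by
  rw [hQ j, Qfun, dif_neg (mt mem_rpos.2 hj)]

theorem excPos_eq (hQ : IsQ lam Q) : ExcPos Q = univ \ rpos lam := by
  ext j
  rw [mem_excPos, mem_sdiff, and_iff_right (mem_univ j)]
  constructor
  · intro h hj
    exact (arc_lt (hQ.arc_of_mem_rpos hj)).not_ge h
  · intro hj
    rw [hQ.eq_compMax hj]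
    exact Connected.le_compMax .refl

theorem excVal_eq (hQ : IsQ lam Q) : ExcVal Q = univ \ lpos lam := by
  have hsub : ExcVal Q ⊆ univ \ lpos lam := by
    intro v hv
    obtain ⟨j, hj, rfl⟩ := mem_image.1 hv
    rw [hQ.excPos_eq, mem_sdiff] at hj
    rw [hQ.eq_compMax hj.2, mem_sdiff, mem_lpos]
    refine ⟨mem_univ _, fun ⟨k, hk⟩ => ?_⟩
    have hjk : Connected lam j k := (connected_compMax j).tail (Or.inl hk)
    exact (arc_lt hk).not_ge hjk.le_compMax
  refine eq_of_subset_of_card_le hsub ?_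
  rw [ExcVal, card_image_of_injective _ Q.injective, hQ.excPos_eq,
    card_sdiff_of_subset (subset_univ _), card_sdiff_of_subset (subset_univ _), card_lpos]

theorem mem_Cset (hQ : IsQ lam Q) : Q ∈ Cset lam := ⟨hQ.excVal_eq, hQ.excPos_eq⟩

theorem nestedOn_excPos (hQ : IsQ lam Q) : NestedOn (· ≤ ·) Q (ExcPos Q) := by
  rw [hQ.excPos_eq]
  intro a ha b hb hab hba
  rw [mem_sdiff] at ha hb
  rw [hQ.eq_compMax ha.2] at hba ⊢
  rw [hQ.eq_compMax hb.2]
  by_contra! hlt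
  have hnc : ¬ Connected lam a b := fun h => hlt.ne h.compMax_eq
  -- The walk from `a` to its maximum jumps over `b` along an arc `(u, v)`, the walk from `b` to
  -- its maximum jumps over `v` along an arc `(u', v')` with `b ≤ u'`, and these arcs cross.
  obtain ⟨u, v, huv, hub, hbv, hau⟩ := (connected_compMax a).exists_arc_across hab hba
  have hav : Connected lam a v := hau.tail (Or.inl huv)
  have hbv' : b < v := lt_of_le_of_ne hbv fun e => hnc (e ▸ hav)
  obtain ⟨u', v', huv', hu'v, hvv', hbu'⟩ :=
    (connected_compMax b).exists_arc_across hbv' (hav.le_compMax.trans hlt.le)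
  have hbu'' : b ≤ u' := hbu'.le_of_notMem_rpos hb.2
  exact not_crossing huv huv' (fun e => (hub.trans_le hbu'').ne (congrArg Prod.fst e))
    (hub.le.trans hbu'') hu'v hvv'

theorem nested_compl_excPos (hQ : IsQ lam Q) :
    ∀ a ∈ univ \ ExcPos Q, ∀ b ∈ univ \ ExcPos Q, a < b → Q b < a → Q b ≤ Q a := by
  simp only [hQ.excPos_eq, sdiff_sdiff_right_self, inf_eq_inter, univ_inter]
  intro a ha b hb hab hba
  by_contra! h
  exact not_crossing (hQ.arc_of_mem_rpos ha) (hQ.arc_of_mem_rpos hb)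
    (fun e => hab.ne (congrArg Prod.snd e)) h.le hba hab.le

theorem isNested (hQ : IsQ lam Q) : IsNested Q :=
  ⟨hQ.nestedOn_excPos, hQ.nested_compl_excPos⟩

end NCP.IsQ

/-- `Q_λ` is the Bruhat-maximum element of the excedance class `C_λ`. -/
theorem stmt6 (n : ℕ) (lam : NCP n) (Q : Equiv.Perm (Fin n)) (hQ : NCP.IsQ lam Q) :
    Q ∈ NCP.Cset lam ∧ ∀ w ∈ NCP.Cset lam, BruhatLE w Q :=
  ⟨hQ.mem_Cset, fun _ hw => bruhatLE_of_excEq hQ.isNested (NCP.excEq_of_mem_Cset hw hQ.mem_Cset)⟩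
end
end
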